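/- arXiv:1008.3170 — 4 statements merged into one kernel-verified Lean document; each statement's English description precedes it below -/
import Mathlib

section
/- Let L : ℝ^m × ℝ^N × (ℝ^N)^m → ℝ, written L(b,y,w), be continuously differentiable, and fix b ∈ ℝ^m, y ∈ ℝ^N, v ∈ (ℝ^N)^m. Define f(J) := L(b, y, v·J⁻¹)·det J on the open set of invertible m×m matrices J, where (v·J⁻¹)^A_c = Σ_μ v^A_μ (J⁻¹)^μ_c. Then f is differentiable and its partial derivative with respect to the matrix entry J^a_μ equals ∂f/∂J^a_μ (J) = Σ_c [ L(b,y,w)·δ^c_a − Σ_A (∂L/∂w^A_c)(b,y,w)·w^A_a ] · (J⁻¹)^μ_c · det J, where w := v·J⁻¹. -/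
/-!
Write `f = L̃` with `L̃(K) = L(b, y, v·K⁻¹) · det K`. By the product and chain rules the claim
reduces to two classical matrix derivatives at an invertible `J`: the cofactor expansion
`∂ det J / ∂J^a_μ = adj(J)^μ_a = (J⁻¹)^μ_a det J`, and `d(K⁻¹) = -J⁻¹ (dK) J⁻¹`, which gives
`∂(v·J⁻¹)^A_c / ∂J^a_μ = -(v·J⁻¹)^A_a (J⁻¹)^μ_c`. Expanding the derivative of `L` in the
basis `Pi.single A (Pi.single c 1)` and collecting terms produces the canonical
stress-energy-momentum tensor.
-/

open Matrix

section Algebra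

variable {n : Type*} [Fintype n] [DecidableEq n]

theorem Matrix.mul_single_mul_apply {m l α : Type*} [NonAssocSemiring α] (M : Matrix m n α)
    (N : Matrix n l α) (a μ : n) (A : m) (c : l) :
    (M * single a μ (1 : α) * N) A c = M A a * N μ c := by
  rw [Matrix.mul_apply, Fintype.sum_eq_single μ, mul_single_apply_same, mul_one]
  intro ν hν
  rw [mul_single_apply_of_ne _ _ _ _ _ hν, zero_mul]

theorem Matrix.det_smul_inv_eq_adjugate {R : Type*} [CommRing R] (A : Matrix n n R)
    (h : IsUnit A.det) : A.det • A⁻¹ = A.adjugate := by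
  rw [inv_def, smul_smul, Ring.mul_inverse_cancel _ h, one_smul]

theorem LinearMap.map_eq_sum_smul_single_single {R M F ι κ : Type*} [Semiring R]
    [AddCommMonoid M] [Module R M] [Fintype ι] [DecidableEq ι] [Fintype κ] [DecidableEq κ]
    [FunLike F (ι → κ → R) M] [LinearMapClass F R (ι → κ → R) M] (φ : F) (X : ι → κ → R) :
    φ X = ∑ i, ∑ j, X i j • φ (Pi.single i (Pi.single j 1)) := by
  conv_lhs => rw [show X = ∑ i, ∑ j, X i j • Pi.single i (Pi.single j (1 : R)) by
    ext i j; simp [Finset.sum_apply, Pi.single_apply, ite_apply]]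
  simp only [map_sum, map_smul]

variable {R ι : Type*} [CommRing R]

noncomputable def mulInvOf (v : ι → n → R) (K : n → n → R) : ι → n → R :=
  fun A c => ∑ μ, v A μ * (of K)⁻¹ μ c

noncomputable def transformedLagrangian (g : (ι → n → R) → R) (v : ι → n → R)
    (K : n → n → R) : R :=
  g (mulInvOf v K) * (of K).det

end Algebra

section Determinant

variable {𝕜 : Type*} [NontriviallyNormedField 𝕜] {n : Type*} [Fintype n] [DecidableEq n]

def Matrix.detRowContinuousMultilinear :
    ContinuousMultilinearMap 𝕜 (fun _ : n => n → 𝕜) 𝕜 where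
  toMultilinearMap := (detRowAlternating : (n → 𝕜) [⋀^n]→ₗ[𝕜] 𝕜).toMultilinearMap
  cont := continuous_id.matrix_det

theorem hasFDerivAt_det_of (J : n → n → 𝕜) :
    HasFDerivAt (fun K : n → n → 𝕜 => (of K).det)
      ((detRowContinuousMultilinear (𝕜 := 𝕜)).linearDeriv J) J :=
  detRowContinuousMultilinear.hasFDerivAt J

theorem Matrix.detRowContinuousMultilinear_linearDeriv_single (J : n → n → 𝕜) (a μ : n) :
    (detRowContinuousMultilinear (𝕜 := 𝕜)).linearDeriv J (Pi.single a (Pi.single μ 1)) =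
      adjugate (of J) μ a := by
  rw [ContinuousMultilinearMap.linearDeriv_apply, Fintype.sum_eq_single a, Pi.single_eq_same,
    adjugate_apply]
  · rfl
  · intro i hi
    rw [Pi.single_eq_of_ne hi]
    exact detRowContinuousMultilinear.map_update_zero J i

end Determinant

section Inverse

variable {𝕜 : Type*} [RCLike 𝕜] {n ι : Type*} [Fintype n] [DecidableEq n] [Fintype ι]

-- Any norm on matrices gives the same derivatives; this one makes `Matrix n n 𝕜` a normed
-- algebra, so that `hasFDerivAt_ringInverse` applies.
attribute [local instance] Matrix.linftyOpNormedRing Matrix.linftyOpNormedAlgebra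

theorem Matrix.hasFDerivAt_inv {A : Matrix n n 𝕜} (hA : IsUnit A.det) :
    HasFDerivAt (fun B : Matrix n n 𝕜 => B⁻¹)
      (-ContinuousLinearMap.mulLeftRight 𝕜 _ A⁻¹ A⁻¹) A := by
  have : CompleteSpace (Matrix n n 𝕜) := FiniteDimensional.complete 𝕜 _
  obtain ⟨u, rfl⟩ := (isUnit_iff_isUnit_det A).2 hA
  simpa only [nonsing_inv_eq_ringInverse, Ring.inverse_unit] using
    hasFDerivAt_ringInverse (𝕜 := 𝕜) u

theorem exists_hasFDerivAt_mulInvOf (v : ι → n → 𝕜) {J : n → n → 𝕜}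
    (hJ : IsUnit (of J).det) :
    ∃ D : (n → n → 𝕜) →L[𝕜] (ι → n → 𝕜), HasFDerivAt (mulInvOf v) D J ∧ ∀ a μ,
      D (Pi.single a (Pi.single μ 1)) = fun A c => -(mulInvOf v J A a * (of J)⁻¹ μ c) := by
  let e : (n → n → 𝕜) ≃L[𝕜] Matrix n n 𝕜 := (ofLinearEquiv 𝕜).toContinuousLinearEquiv
  let mulLeftV : Matrix n n 𝕜 →L[𝕜] (ι → n → 𝕜) := LinearMap.toContinuousLinearMap
    ((ofLinearEquiv 𝕜).symm.toLinearMap ∘ₗ mulLeftLinearMap n 𝕜 (of v))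
  refine ⟨_, mulLeftV.hasFDerivAt.comp J ((hasFDerivAt_inv hJ).comp J e.hasFDerivAt),
    fun a μ => ?_⟩
  change mulLeftV (-((of J)⁻¹ * of (Pi.single a (Pi.single μ 1)) * (of J)⁻¹)) = _
  rw [map_neg]
  ext A c
  change -(of v * ((of J)⁻¹ * of (Pi.single a (Pi.single μ 1)) * (of J)⁻¹) :
    Matrix ι n 𝕜) A c = _
  rw [← single_eq_of_single_single, ← Matrix.mul_assoc, ← Matrix.mul_assoc,
    mul_single_mul_apply]
  rfl

variable [DecidableEq ι]

theorem exists_hasFDerivAt_transformedLagrangian {g : (ι → n → 𝕜) → 𝕜}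
    {g' : (ι → n → 𝕜) →L[𝕜] 𝕜} (v : ι → n → 𝕜) {J : n → n → 𝕜} (hJ : IsUnit (of J).det)
    (hg : HasFDerivAt g g' (mulInvOf v J)) :
    ∃ D : (n → n → 𝕜) →L[𝕜] 𝕜, HasFDerivAt (transformedLagrangian g v) D J ∧ ∀ a μ,
      D (Pi.single a (Pi.single μ 1)) =
        ∑ c, (g (mulInvOf v J) * (if c = a then 1 else 0) -
          ∑ A, g' (Pi.single A (Pi.single c 1)) * mulInvOf v J A a) *
            (of J)⁻¹ μ c * (of J).det := by
  obtain ⟨DW, hW, hDW⟩ := exists_hasFDerivAt_mulInvOf v hJ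
  refine ⟨_, (hg.comp J hW).mul (hasFDerivAt_det_of J), fun a μ => ?_⟩
  simp only [_root_.add_apply, _root_.smul_apply, Function.comp_apply,
    ContinuousLinearMap.comp_apply, hDW, detRowContinuousMultilinear_linearDeriv_single,
    smul_eq_mul]
  rw [LinearMap.map_eq_sum_smul_single_single g', ← det_smul_inv_eq_adjugate _ hJ]
  simp only [Matrix.smul_apply, smul_eq_mul, sub_mul, Finset.sum_sub_distrib, mul_ite, mul_one,
    mul_zero, ite_mul, zero_mul, Finset.sum_ite_eq', Finset.mem_univ, if_true, Finset.mul_sum,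
    Finset.sum_mul]
  rw [Finset.sum_comm]
  simp only [neg_mul, Finset.sum_neg_distrib, mul_neg, ← sub_eq_add_neg]
  congr 1
  · ring
  · exact Finset.sum_congr rfl fun c _ => Finset.sum_congr rfl fun A _ => by ring

end Inverse

/-- for `f(J) := L(b, y, v·J⁻¹)·det J` and invertible `J`, `f` is
differentiable at `J` and `∂f/∂J^a_μ = Σ_c [L δ^c_a − Σ_A (∂L/∂w^A_c) w^A_a] (J⁻¹)^μ_c det J`
where `w = v·J⁻¹`. -/
theorem stmt_4 {m N : ℕ}
    (L : (Fin m → ℝ) × (Fin N → ℝ) × (Fin N → Fin m → ℝ) → ℝ)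
    (hL : ContDiff ℝ 1 L)
    (b : Fin m → ℝ) (y : Fin N → ℝ) (v : Fin N → Fin m → ℝ)
    (f : (Fin m → Fin m → ℝ) → ℝ)
    (hf : ∀ J : Fin m → Fin m → ℝ,
      f J = L (b, y, fun A c => ∑ μ : Fin m, v A μ * (Matrix.of J)⁻¹ μ c) * (Matrix.of J).det)
    (J : Fin m → Fin m → ℝ) (hJ : (Matrix.of J).det ≠ 0)
    (w : Fin N → Fin m → ℝ)
    (hw : w = fun A c => ∑ μ : Fin m, v A μ * (Matrix.of J)⁻¹ μ c) :
    DifferentiableAt ℝ f J ∧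
      ∀ (a μ : Fin m),
        fderiv ℝ f J (Pi.single a (Pi.single μ 1))
          = ∑ c : Fin m,
              (L (b, y, w) * (if c = a then (1 : ℝ) else 0)
                  - ∑ A : Fin N,
                      fderiv ℝ L (b, y, w) (0, 0, Pi.single A (Pi.single c 1)) * w A a)
                * (Matrix.of J)⁻¹ μ c * (Matrix.of J).det := by
  have hf' : f = transformedLagrangian (fun X => L (b, y, X)) v := funext hf
  have hw' : w = mulInvOf v J := hw
  subst hf' hw'
  have hLw : HasFDerivAt (fun X => L (b, y, X))
      ((fderiv ℝ L (b, y, mulInvOf v J)).comp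
        ((ContinuousLinearMap.inr ℝ _ _).comp (ContinuousLinearMap.inr ℝ _ _))) (mulInvOf v J) :=
    (hL.differentiable one_ne_zero _).hasFDerivAt.comp _
      ((hasFDerivAt_prodMk_right b _).comp _ (hasFDerivAt_prodMk_right y _))
  obtain ⟨D, hD, hD_single⟩ :=
    exists_hasFDerivAt_transformedLagrangian v (isUnit_iff_ne_zero.2 hJ) hLw
  exact ⟨hD.differentiableAt, fun a μ => by rw [hD.fderiv, hD_single]; rfl⟩
end

section
/- Let L : ℝ × ℝ^n × ℝ^n → ℝ, written L(T,q,u), be smooth; let T : ℝ → ℝ be smooth with Ṫ(t) ≠ 0 for all t, and q : ℝ → ℝ^n smooth. Along (T,q) write Λ(t) := (T(t), q(t), q̇(t)/Ṫ(t)). If q satisfies the Euler–Lagrange equations of the reparametrized Lagrangian L̃(t) := L(Λ(t))·Ṫ(t) with respect to q, i.e. (∂L/∂q^A)(Λ(t))·Ṫ(t) − (d/dt)[(∂L/∂u^A)(Λ(t))] = 0 for all A and t, then the Euler–Lagrange equation of L̃ with respect to the covariance field T is identically satisfied: (∂L/∂T)(Λ(t))·Ṫ(t) − (d/dt)[ L(Λ(t))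 − Σ_A (∂L/∂u^A)(Λ(t))·(q̇^A(t)/Ṫ(t)) ] = 0 for all t ∈ ℝ. -/
/-! Write `u = q̇/Ṫ`, so that `q̇ = Ṫ u`, and `p_A = ∂L/∂u^A(Λ)`. By the chain rule,
`d/dt L(Λ) = ∂_T L Ṫ + Σ_A ∂_{q^A} L Ṫ u^A + Σ_A p_A u̇^A`, while the Euler–Lagrange equations
for `q` say `ṗ_A = ∂_{q^A} L Ṫ`, so `d/dt Σ_A p_A u^A = Σ_A ∂_{q^A} L Ṫ u^A + Σ_A p_A u̇^A`.
The difference is `∂_T L Ṫ`. -/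

section

variable {ι : Type*} [Fintype ι] [DecidableEq ι]

theorem map_prod_pi_pi_eq_sum {R M F : Type*} [CommSemiring R] [AddCommMonoid M]
    [Module R M] [FunLike F (R × (ι → R) × (ι → R)) M] [LinearMapClass F R _ M] (f : F)
    (a : R) (v c : ι → R) :
    f (a, v, c) = a • f (1, 0, 0) + ∑ A, v A • f (0, Pi.single A 1, 0)
      + ∑ A, c A • f (0, 0, Pi.single A 1) := by
  have hsplit : (a, v, c) = a • ((1 : R), (0 : ι → R), (0 : ι → R))
      + ∑ A, v A • ((0 : R), (Pi.single A 1 : ι → R), (0 : ι → R))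
      + ∑ A, c A • ((0 : R), (0 : ι → R), (Pi.single A 1 : ι → R)) := by
    ext <;> simp [Prod.fst_sum, Prod.snd_sum, ← Pi.single_smul, Finset.univ_sum_single]
  rw [hsplit]
  simp only [map_add, map_sum, map_smul]

theorem hasDerivAt_lagrangian_sub_sum_momentum_mul_velocity
    {L : ℝ × (ι → ℝ) × (ι → ℝ) → ℝ} {τ : ℝ → ℝ} {x u : ℝ → ι → ℝ} {p : ι → ℝ → ℝ}
    {t τ' : ℝ} {u' : ι → ℝ}
    (hL : DifferentiableAt ℝ L (τ t, x t, u t)) (hτ : HasDerivAt τ τ' t)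
    (hx : HasDerivAt x (τ' • u t) t) (hu : HasDerivAt u u' t)
    (hp_eq : ∀ A, p A t = fderiv ℝ L (τ t, x t, u t) (0, 0, Pi.single A 1))
    (hp : ∀ A, HasDerivAt (p A) (fderiv ℝ L (τ t, x t, u t) (0, Pi.single A 1, 0) * τ') t) :
    HasDerivAt (fun s => L (τ s, x s, u s) - ∑ A, p A s * u s A)
      (fderiv ℝ L (τ t, x t, u t) (1, 0, 0) * τ') t := by
  set f := fderiv ℝ L (τ t, x t, u t)
  have hL_comp : HasDerivAt (fun s => L (τ s, x s, u s)) (f (τ', τ' • u t, u')) t :=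
    hL.hasFDerivAt.comp_hasDerivAt t (hτ.prodMk (hx.prodMk hu))
  have hpu : HasDerivAt (fun s => ∑ A, p A s * u s A)
      (∑ A, (f (0, Pi.single A 1, 0) * τ' * u t A + p A t * u' A)) t :=
    HasDerivAt.fun_sum fun A _ => (hp A).mul (hasDerivAt_pi.mp hu A)
  refine (hL_comp.sub hpu).congr_deriv ?_
  have hterm : ∀ A, f (0, Pi.single A 1, 0) * τ' * u t A + p A t * u' A
      = (τ' • u t) A * f (0, Pi.single A 1, 0) + u' A * f (0, 0, Pi.single A 1) := by
    intro A
    rw [hp_eq, Pi.smul_apply, smul_eq_mul]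
    ring
  rw [map_prod_pi_pi_eq_sum f, Finset.sum_congr rfl fun A _ => hterm A, Finset.sum_add_distrib]
  simp only [smul_eq_mul]
  ring

end

/-- on shell for `q`, the Euler–Lagrange equation of the reparametrized
mechanics Lagrangian `L̃ = L(Λ(t))·Ṫ(t)` with respect to the covariance field `T`,
namely `(∂L/∂T)(Λ)·Ṫ − d/dt[L(Λ) − Σ_A (∂L/∂u^A)(Λ)·(q̇^A/Ṫ)] = 0`, is identically
satisfied. -/
theorem stmt_8 {n : ℕ}
    (L : ℝ × (Fin n → ℝ) × (Fin n → ℝ) → ℝ) (hL : ContDiff ℝ (⊤ : ℕ∞) L)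
    (T : ℝ → ℝ) (hT : ContDiff ℝ (⊤ : ℕ∞) T) (hT' : ∀ t : ℝ, deriv T t ≠ 0)
    (q : ℝ → (Fin n → ℝ)) (hq : ContDiff ℝ (⊤ : ℕ∞) q)
    (hEL : ∀ (A : Fin n) (t : ℝ),
        fderiv ℝ L (T t, q t, fun B => deriv q t B / deriv T t) (0, Pi.single A 1, 0)
            * deriv T t
          - deriv (fun t' =>
              fderiv ℝ L (T t', q t', fun B => deriv q t' B / deriv T t')
                (0, 0, Pi.single A 1)) t = 0)
    (t : ℝ) :
    fderiv ℝ L (T t, q t, fun B => deriv q t B / deriv T t) (1, 0, 0) * deriv T t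
      - deriv (fun t' =>
          L (T t', q t', fun B => deriv q t' B / deriv T t')
            - ∑ A : Fin n,
                fderiv ℝ L (T t', q t', fun B => deriv q t' B / deriv T t')
                    (0, 0, Pi.single A 1)
                  * (deriv q t' A / deriv T t')) t = 0 := by
  set u : ℝ → Fin n → ℝ := fun s B => deriv q s B / deriv T s
  have hu : ContDiff ℝ (⊤ : ℕ∞) u := contDiff_pi.mpr fun B =>
    ((contDiff_pi.mp (contDiff_infty_iff_deriv.mp hq).2) B).div
      (contDiff_infty_iff_deriv.mp hT).2 hT'
  have hp : ∀ A : Fin n,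
      ContDiff ℝ (⊤ : ℕ∞) fun s => fderiv ℝ L (T s, q s, u s) (0, 0, Pi.single A 1) := fun A =>
    ((hL.fderiv_right le_rfl).comp (hT.prodMk (hq.prodMk hu))).clm_apply contDiff_const
  have hvelocity : deriv T t • u t = deriv q t := by
    funext B
    simp only [u, Pi.smul_apply, smul_eq_mul]
    exact mul_div_cancel₀ _ (hT' t)
  have henergy := hasDerivAt_lagrangian_sub_sum_momentum_mul_velocity
    ((hL.differentiable (by simp)).differentiableAt) ((hT.differentiable (by simp)) t).hasDerivAt
    (hvelocity ▸ ((hq.differentiable (by simp)) t).hasDerivAt)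
    ((hu.differentiable (by simp)) t).hasDerivAt (fun _ => rfl)
    fun A => (sub_eq_zero.mp (hEL A t)) ▸ (((hp A).differentiable (by simp)) t).hasDerivAt
  exact sub_eq_zero.mpr henergy.deriv.symm
end

section
/- Let L : ℝ × ℝ^n × ℝ^n → ℝ, written L(T,q,u), be smooth; let T : ℝ → ℝ be smooth with Ṫ(t) ≠ 0 for all t, q : ℝ → ℝ^n smooth, and define the reparametrized Lagrangian density coefficient L̃[T,q](t) := L(T(t), q(t), q̇(t)/Ṫ(t))·Ṫ(t). Then for every smooth diffeomorphism σ : ℝ → ℝ and every t ∈ ℝ, L̃[T∘σ⁻¹, q∘σ⁻¹](σ(t)) · σ′(t) = L̃[T,q](t); that is, the covariantized mechanics Lagrangian density is invariant under time reparametrization. -/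
/-!
Substituting `T ∘ φ`, `q ∘ φ` with `φ = σ⁻¹` multiplies both `Ṫ` and `q̇` by `φ'`, so the velocity
argument `q̇ / Ṫ` of `L` is unchanged and the density only picks up the factor `φ' = 1 / σ'`,
which the factor `σ'` cancels.
-/

noncomputable section

/-- The covariantized mechanics Lagrangian density coefficient
`L̃[T,q](t) = L(T(t), q(t), q̇(t)/Ṫ(t))·Ṫ(t)`. -/
def covMech {n : ℕ} (L : ℝ × (Fin n → ℝ) × (Fin n → ℝ) → ℝ)
    (T : ℝ → ℝ) (q : ℝ → (Fin n → ℝ)) (t : ℝ) : ℝ :=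
  L (T t, q t, fun A => deriv q t A / deriv T t) * deriv T t

theorem HasDerivAt.mul_eq_one_of_eventually_leftInverse {𝕜 : Type*} [NontriviallyNormedField 𝕜]
    {f g : 𝕜 → 𝕜} {f' g' x : 𝕜} (hf : HasDerivAt f f' x) (hg : HasDerivAt g g' (f x))
    (hgf : ∀ᶠ y in nhds x, g (f y) = y) : g' * f' = 1 :=
  (hg.comp x hf).unique <| (hasDerivAt_id x).congr_of_eventuallyEq hgf

theorem covMech_comp {n : ℕ} (L : ℝ × (Fin n → ℝ) × (Fin n → ℝ) → ℝ)
    {T φ : ℝ → ℝ} {q : ℝ → (Fin n → ℝ)} {φ' s : ℝ} (hφ : HasDerivAt φ φ' s) (hφ' : φ' ≠ 0)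
    (hT : DifferentiableAt ℝ T (φ s)) (hq : DifferentiableAt ℝ q (φ s)) :
    covMech L (T ∘ φ) (q ∘ φ) s = covMech L T q (φ s) * φ' := by
  have hTφ : deriv (T ∘ φ) s = deriv T (φ s) * φ' := (hT.hasDerivAt.comp s hφ).deriv
  have hqφ : deriv (q ∘ φ) s = φ' • deriv q (φ s) := (hq.hasDerivAt.scomp s hφ).deriv
  have hvelocity : (fun A => deriv (q ∘ φ) s A / deriv (T ∘ φ) s)
      = fun A => deriv q (φ s) A / deriv T (φ s) := by
    funext A
    rw [hTφ, hqφ, Pi.smul_apply, smul_eq_mul, mul_comm (deriv T _), mul_div_mul_left _ _ hφ']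
  rw [covMech, covMech, hvelocity, hTφ, Function.comp_apply, Function.comp_apply, mul_assoc]

theorem stmt_10_general {n : ℕ}
    (L : ℝ × (Fin n → ℝ) × (Fin n → ℝ) → ℝ)
    (T : ℝ → ℝ) (hT : ContDiff ℝ (⊤ : ℕ∞) T)
    (q : ℝ → (Fin n → ℝ)) (hq : ContDiff ℝ (⊤ : ℕ∞) q)
    (σ σinv : ℝ → ℝ) (hσ : ContDiff ℝ (⊤ : ℕ∞) σ) (hσinv : ContDiff ℝ (⊤ : ℕ∞) σinv)
    (hσ1 : Function.LeftInverse σinv σ)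
    (t : ℝ) :
    covMech L (T ∘ σinv) (q ∘ σinv) (σ t) * deriv σ t = covMech L T q t := by
  have hσd : HasDerivAt σ (deriv σ t) t := (hσ.differentiable (by simp) t).hasDerivAt
  have hσinvd : HasDerivAt σinv (deriv σinv (σ t)) (σ t) :=
    (hσinv.differentiable (by simp) (σ t)).hasDerivAt
  have hinv : deriv σinv (σ t) * deriv σ t = 1 :=
    hσd.mul_eq_one_of_eventually_leftInverse hσinvd (.of_forall hσ1)
  rw [covMech_comp L hσinvd (left_ne_zero_of_mul_eq_one hinv)
      (hT.differentiable (by simp) _) (hq.differentiable (by simp) _),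
    mul_assoc, hinv, mul_one, hσ1 t]

/-- the covariantized mechanics Lagrangian density is invariant under time
reparametrization: `L̃[T∘σ⁻¹, q∘σ⁻¹](σ(t))·σ′(t) = L̃[T,q](t)`. -/
theorem stmt_10 {n : ℕ}
    (L : ℝ × (Fin n → ℝ) × (Fin n → ℝ) → ℝ) (hL : ContDiff ℝ (⊤ : ℕ∞) L)
    (T : ℝ → ℝ) (hT : ContDiff ℝ (⊤ : ℕ∞) T) (hT' : ∀ t : ℝ, deriv T t ≠ 0)
    (q : ℝ → (Fin n → ℝ)) (hq : ContDiff ℝ (⊤ : ℕ∞) q)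
    (σ σinv : ℝ → ℝ) (hσ : ContDiff ℝ (⊤ : ℕ∞) σ) (hσinv : ContDiff ℝ (⊤ : ℕ∞) σinv)
    (hσ1 : Function.LeftInverse σinv σ) (hσ2 : Function.RightInverse σinv σ)
    (hσ' : ∀ t : ℝ, deriv σ t ≠ 0)
    (t : ℝ) :
    covMech L (T ∘ σinv) (q ∘ σinv) (σ t) * deriv σ t = covMech L T q t :=
  stmt_10_general L T hT q hq σ σinv hσ hσinv hσ1 t
end
end

section
/- (Minimal coupling identity.) Let L : ℝ^m × ℝ^n × (ℝ^n)^m → ℝ, written L(x, y, v) with v = (v_1, …, v_m), v_μ ∈ ℝ^n, be continuous. Let η : ℝ^m → GL(n, ℝ) be continuously differentiable and φ : ℝ^m → ℝ^n continuously differentiable, and suppose L is invariant under the pointwise action of the values of η: for every x ∈ ℝ^m, y ∈ ℝ^n, v ∈ (ℝ^n)^m, L(x, η(x)·y, (η(x)·v_1, …, η(x)·v_m)) = L(x, y, v). Then for every x ∈ ℝ^m, L( x, η(x)φ(x), (∂_1(ηφ)(x), …, ∂_m(ηφ)(x)) ) = L( x, φ(x), (∂_1φ(x) + A_1(x)φ(x),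 …, ∂_mφ(x) + A_m(x)φ(x)) ), where A_μ(x) := η(x)⁻¹ ∂_μ η(x) and (ηφ)(x) := η(x)·φ(x). -/
/-!
Writing `A_μ = η⁻¹ ∂_μ η`, the product rule gives `η (∂_μ φ + A_μ φ) = ∂_μ (η φ)`: multiplying the
covariant derivative by `η` yields the ordinary derivative of `η φ`. Applying the invariance of `L`
under `η(x)` to the data `(φ(x), ∂_μ φ(x) + A_μ(x) φ(x))` therefore turns the right-hand side into
the left-hand side.
-/

noncomputable section

/-- Entrywise partial derivative `∂_μ η` of a matrix-valued map `η : ℝ^m → M_{n×n}(ℝ)`. -/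
def dmat {m n : ℕ} (η : (Fin m → ℝ) → Matrix (Fin n) (Fin n) ℝ) (μ : Fin m)
    (x : Fin m → ℝ) : Matrix (Fin n) (Fin n) ℝ :=
  Matrix.of fun i j => fderiv ℝ (fun z => η z i j) x (Pi.single μ 1)

open Matrix

section

variable {E : Type*} [NormedAddCommGroup E] [NormedSpace ℝ E] {ι κ : Type*} [Fintype κ]

theorem fderiv_mulVec_apply {η : E → Matrix ι κ ℝ} {φ : E → κ → ℝ} {x : E}
    (hη : ∀ i j, DifferentiableAt ℝ (fun z => η z i j) x) (hφ : DifferentiableAt ℝ φ x)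
    (e : E) :
    fderiv ℝ (fun z => η z *ᵥ φ z) x e =
      η x *ᵥ fderiv ℝ φ x e + (of fun i j => fderiv ℝ (fun z => η z i j) x e) *ᵥ φ x := by
  have hφ_apply (j : κ) : DifferentiableAt ℝ (fun z => φ z j) x := differentiableAt_pi.1 hφ j
  have hprod (i : ι) (j : κ) : DifferentiableAt ℝ (fun z => η z i j * φ z j) x :=
    (hη i j).mul (hφ_apply j)
  change fderiv ℝ (fun z i => ∑ j, η z i j * φ z j) x e = _
  ext i
  rw [fderiv_pi fun i => DifferentiableAt.fun_sum fun j _ => hprod i j]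
  simp [fderiv_fun_sum (fun j _ => hprod i j), fderiv_fun_mul (hη i _) (hφ_apply _),
    fderiv_apply hφ, mulVec, dotProduct, Finset.sum_add_distrib, mul_comm]

theorem mulVec_covariantDeriv_eq_fderiv_mulVec [DecidableEq κ] {η : E → Matrix κ κ ℝ}
    {φ : E → κ → ℝ} {x : E} (hη : ∀ i j, DifferentiableAt ℝ (fun z => η z i j) x)
    (hφ : DifferentiableAt ℝ φ x) (hunit : IsUnit (η x)) (e : E) :
    η x *ᵥ (fderiv ℝ φ x e + ((η x)⁻¹ * of fun i j => fderiv ℝ (fun z => η z i j) x e) *ᵥ φ x) =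
      fderiv ℝ (fun z => η z *ᵥ φ z) x e := by
  rw [fderiv_mulVec_apply hη hφ, mulVec_add, mulVec_mulVec,
    mul_nonsing_inv_cancel_left _ _ ((isUnit_iff_isUnit_det _).mp hunit)]

end

theorem stmt_18_general {m n : ℕ}
    (L : (Fin m → ℝ) × (Fin n → ℝ) × (Fin m → Fin n → ℝ) → ℝ)
    (η : (Fin m → ℝ) → Matrix (Fin n) (Fin n) ℝ)
    (hη : ∀ i j : Fin n, ContDiff ℝ 1 fun x => η x i j)
    (hunit : ∀ x : Fin m → ℝ, IsUnit (η x))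
    (φ : (Fin m → ℝ) → (Fin n → ℝ)) (hφ : ContDiff ℝ 1 φ)
    (hinv : ∀ (x : Fin m → ℝ) (y : Fin n → ℝ) (v : Fin m → Fin n → ℝ),
      L (x, (η x).mulVec y, fun μ => (η x).mulVec (v μ)) = L (x, y, v))
    (x : Fin m → ℝ) :
    L (x, (η x).mulVec (φ x),
        fun μ => fderiv ℝ (fun z => (η z).mulVec (φ z)) x (Pi.single μ 1))
      = L (x, φ x,
          fun μ => fderiv ℝ φ x (Pi.single μ 1) + ((η x)⁻¹ * dmat η μ x).mulVec (φ x)) := by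
  have hηx (i j : Fin n) := (hη i j).differentiable one_ne_zero x
  have hφx := hφ.differentiable one_ne_zero x
  simp_rw [← mulVec_covariantDeriv_eq_fderiv_mulVec hηx hφx (hunit x)]
  exact hinv x (φ x) _

/-- minimal coupling identity: if `L(x,y,v)` is invariant under the
pointwise action of the values of `η : ℝ^m → GL(n,ℝ)`, then
`L(x, η(x)φ(x), ∂_μ(ηφ)(x)) = L(x, φ(x), ∂_μφ(x) + A_μ(x)φ(x))`
where `A_μ = η⁻¹ ∂_μ η`. -/
theorem stmt_18 {m n : ℕ}
    (L : (Fin m → ℝ) × (Fin n → ℝ) × (Fin m → Fin n → ℝ) → ℝ) (hL : Continuous L)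
    (η : (Fin m → ℝ) → Matrix (Fin n) (Fin n) ℝ)
    (hη : ∀ i j : Fin n, ContDiff ℝ 1 fun x => η x i j)
    (hunit : ∀ x : Fin m → ℝ, IsUnit (η x))
    (φ : (Fin m → ℝ) → (Fin n → ℝ)) (hφ : ContDiff ℝ 1 φ)
    (hinv : ∀ (x : Fin m → ℝ) (y : Fin n → ℝ) (v : Fin m → Fin n → ℝ),
      L (x, (η x).mulVec y, fun μ => (η x).mulVec (v μ)) = L (x, y, v))
    (x : Fin m → ℝ) :
    L (x, (η x).mulVec (φ x),
        fun μ => fderiv ℝ (fun z => (η z).mulVec (φ z)) x (Pi.single μ 1))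
      = L (x, φ x,
          fun μ => fderiv ℝ φ x (Pi.single μ 1) + ((η x)⁻¹ * dmat η μ x).mulVec (φ x)) :=
  stmt_18_general L η hη hunit φ hφ hinv x
end
end
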